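/- Let R be a discrete valuation ring of characteristic 2 with uniformizer π and valuation v, and let f(x) = x² − ax − b ∈ R[x] be monic irreducible over the fraction field K and separable (so a ≠ 0). Let m be the maximal integer in {0, 1, …, v(a)} such that v(b − r(r + a)) ≥ 2m for some r ∈ R, and fix r ∈ R with v(b − r(r + a)) ≥ 2m. Then every matrix A ∈ Mat_2(R) with characteristic polynomial f is similar over R to exactly one of the matrices [[−r, πⁱ],[(b − r(r + a))/πⁱ, a + r]] with 0 ≤ i ≤ m. -/

import Mathlib

/-!
Put `B = A + r • 1`. In characteristic 2 the trace of `A + s • 1` is `a` for every `s`, and its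
determinant is `-(b - s (s + a))`; so if `π ^ k` divides every entry of `A + s • 1`, maximality of
`m` gives `k ≤ m`. Hence the exponent `i` of the largest power of the scalar matrix `π` dividing `B`
in `Mat₂(R)` is finite and at most `m`. It is a conjugation invariant, and the `i`-th normal form
`[[-r, π ^ i], [c, a + r]]` shifted by `r` is `[[0, π ^ i], [c, a]]`, whose exponent is exactly `i`:
this is uniqueness.

For existence write `B = π ^ i • N`. If `N ≡ λ` modulo `π`, then `π ^ (i + 1)` divides
`A + (r - π ^ i λ) • 1`, so `i + 1 ≤ m`; then `π ^ (2i + 1)` divides `det B = π ^ (2i) det N`, so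
`π ∣ det N ≡ λ²`, and `π ^ (i + 1)` divides `B` after all. So `N` is not scalar modulo `π`; it has a
cyclic vector, hence is conjugate to its companion matrix, and this conjugates
`A = π ^ i • N - r • 1` to the normal form.
-/

open Polynomial Matrix IsLocalRing

theorem dvd_conj_iff_of_forall_commute {M : Type*} [Monoid M] {c : M} (hc : ∀ p, Commute c p)
    (U : Mˣ) {b : M} : c ∣ U * b * ↑U⁻¹ ↔ c ∣ b := by
  have dvd_conj : ∀ (V : Mˣ) {b : M}, c ∣ b → c ∣ V * b * ↑V⁻¹ := by
    rintro V _ ⟨d, rfl⟩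
    exact ⟨V * d * ↑V⁻¹, by simp only [mul_assoc, ((hc V).left_comm _).symm]⟩
  refine ⟨fun h => ?_, dvd_conj U⟩
  simpa [mul_assoc] using dvd_conj U⁻¹ h

namespace Matrix

variable {R : Type*} [CommRing R]

theorem algebraMap_dvd_iff {n : Type*} [Fintype n] [DecidableEq n] {x : R} {B : Matrix n n R} :
    algebraMap R (Matrix n n R) x ∣ B ↔ ∀ i j, x ∣ B i j := by
  constructor
  · rintro ⟨N, rfl⟩ i j
    exact ⟨N i j, by simp [← Algebra.smul_def]⟩
  · intro h
    choose N hN using h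
    exact ⟨of N, by ext i j; simp [← Algebra.smul_def, hN i j]⟩

theorem trace_eq_and_det_eq_of_charpoly_eq [Nontrivial R] {A : Matrix (Fin 2) (Fin 2) R} {a b : R}
    (h : A.charpoly = X ^ 2 - C a * X - C b) : A.trace = a ∧ A.det = -b := by
  rw [charpoly_fin_two] at h
  exact ⟨by simpa [coeff_X, coeff_C] using congrArg (coeff · 1) h,
    by simpa [coeff_X, coeff_C] using congrArg (coeff · 0) h⟩

theorem det_add_smul_one_fin_two (A : Matrix (Fin 2) (Fin 2) R) (s : R) :
    (A + s • 1).det = A.det + s * A.trace + s ^ 2 := by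
  simp only [det_fin_two, trace_fin_two, Matrix.add_apply, Matrix.smul_apply, smul_eq_mul,
    one_apply_eq, one_apply_ne zero_ne_one, one_apply_ne one_ne_zero, mul_one, mul_zero, add_zero]
  ring

theorem det_add_smul_one_of_trace_eq_of_det_eq {A : Matrix (Fin 2) (Fin 2) R} {a b : R}
    (htr : A.trace = a) (hdet : A.det = -b) (s : R) :
    (A + s • 1).det = -(b - s * (s + a)) := by
  rw [det_add_smul_one_fin_two, htr, hdet]
  ring

/-- Cayley–Hamilton: `w N² = tr N • w N - det N • w`. -/
theorem of_vecMul_mul_eq_companion_mul (N : Matrix (Fin 2) (Fin 2) R) (w : Fin 2 → R) :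
    of ![w, w ᵥ* N] * N = !![0, 1; -N.det, N.trace] * of ![w, w ᵥ* N] := by
  ext i j
  fin_cases i <;> fin_cases j <;>
    simp only [Fin.zero_eta, Fin.mk_one, mul_apply, of_apply, cons_val', cons_val_zero,
      cons_val_one, cons_val_fin_one, vecMul, dotProduct, Fin.sum_univ_two, det_fin_two,
      trace_fin_two] <;> ring

theorem det_of_vecMul (N : Matrix (Fin 2) (Fin 2) R) (w : Fin 2 → R) :
    (of ![w, w ᵥ* N]).det = N 0 1 * w 0 ^ 2 + (N 1 1 - N 0 0) * w 0 * w 1 - N 1 0 * w 1 ^ 2 := by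
  simp only [det_fin_two, of_apply, cons_val_zero, cons_val_one, vecMul, dotProduct,
    Fin.sum_univ_two]
  ring

/-- The witness is `(1, 0)`, `(0, 1)` or `(1, 1)`, so this works even when the residue field is
`𝔽₂`. -/
theorem exists_isUnit_det_of_vecMul [IsLocalRing R] {N : Matrix (Fin 2) (Fin 2) R}
    (hN : ¬ (N 0 1 ∈ maximalIdeal R ∧ N 1 0 ∈ maximalIdeal R ∧ N 0 0 - N 1 1 ∈ maximalIdeal R)) :
    ∃ w : Fin 2 → R, IsUnit (of ![w, w ᵥ* N]).det := by
  simp only [det_of_vecMul, ← notMem_maximalIdeal]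
  by_cases h01 : N 0 1 ∈ maximalIdeal R
  · by_cases h10 : N 1 0 ∈ maximalIdeal R
    · refine ⟨![1, 1], fun h => hN ⟨h01, h10, ?_⟩⟩
      have := Ideal.sub_mem _ (Ideal.sub_mem _ h01 h10) h
      simp only [cons_val_zero, cons_val_one, one_pow, mul_one] at this
      convert this using 1
      ring
    · exact ⟨![0, 1], by simpa using h10⟩
  · exact ⟨![1, 0], by simpa using h01⟩

theorem exists_conj_eq_companion [IsLocalRing R] {N : Matrix (Fin 2) (Fin 2) R}
    (hN : ¬ (N 0 1 ∈ maximalIdeal R ∧ N 1 0 ∈ maximalIdeal R ∧ N 0 0 - N 1 1 ∈ maximalIdeal R)) :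
    ∃ U : (Matrix (Fin 2) (Fin 2) R)ˣ,
      (U : Matrix (Fin 2) (Fin 2) R) * N * (U⁻¹ : _) = !![0, 1; -N.det, N.trace] := by
  obtain ⟨w, hw⟩ := exists_isUnit_det_of_vecMul hN
  refine ⟨((isUnit_iff_isUnit_det _).mpr hw).unit, ?_⟩
  rw [Units.mul_inv_eq_iff_eq_mul]
  exact of_vecMul_mul_eq_companion_mul N w

theorem exists_conj_eq_of_add_smul_one_eq_smul [IsLocalRing R] {A N : Matrix (Fin 2) (Fin 2) R}
    {r x : R} (hN : A + r • 1 = x • N)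
    (hns : ¬ (N 0 1 ∈ maximalIdeal R ∧ N 1 0 ∈ maximalIdeal R ∧ N 0 0 - N 1 1 ∈ maximalIdeal R)) :
    ∃ U : (Matrix (Fin 2) (Fin 2) R)ˣ,
      (U : Matrix (Fin 2) (Fin 2) R) * A * (U⁻¹ : _) = !![-r, x; -(x * N.det), A.trace + r] := by
  obtain ⟨U, hU⟩ := exists_conj_eq_companion hns
  refine ⟨U, ?_⟩
  have htr : A.trace + r = x * N.trace - r := by
    have := congrArg trace hN
    simp only [trace_add, trace_smul, trace_one, Fintype.card_fin, smul_eq_mul] at this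
    linear_combination this
  rw [htr, eq_sub_of_add_eq hN, mul_sub, sub_mul, mul_smul_comm, smul_mul_assoc, hU, mul_smul_comm,
    mul_one, smul_mul_assoc, Units.mul_inv]
  ext i j
  fin_cases i <;> fin_cases j <;> simp

theorem algebraMap_dvd_of_dvd_det {p : R} (hp : Prime p) {N : Matrix (Fin 2) (Fin 2) R}
    (h01 : p ∣ N 0 1) (h10 : p ∣ N 1 0) (hd : p ∣ N 0 0 - N 1 1) (hdet : p ∣ N.det) :
    algebraMap R (Matrix (Fin 2) (Fin 2) R) p ∣ N := by
  have h00 : p ∣ N 0 0 := by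
    refine hp.dvd_of_dvd_pow (n := 2) ?_
    have : N 0 0 ^ 2 = N.det + N 0 0 * (N 0 0 - N 1 1) + N 0 1 * N 1 0 := by
      rw [det_fin_two]; ring
    rw [this]
    exact dvd_add (dvd_add hdet (hd.mul_left _)) (h10.mul_left _)
  have h11 : p ∣ N 1 1 := by simpa using dvd_sub h00 hd
  rw [algebraMap_dvd_iff]
  simp [Fin.forall_fin_two, *]

end Matrix

section CharTwo

variable {R : Type*} [CommRing R] [CharP R 2]

theorem le_of_algebraMap_pow_dvd_add_smul_one {A : Matrix (Fin 2) (Fin 2) R} {π a b : R} {m : ℕ}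
    (htr : A.trace = a) (hdet : A.det = -b)
    (hmax : ∀ m' : ℕ, π ^ m' ∣ a → (∃ r' : R, π ^ (2 * m') ∣ (b - r' * (r' + a))) → m' ≤ m)
    {s : R} {k : ℕ} (h : algebraMap R (Matrix (Fin 2) (Fin 2) R) π ^ k ∣ A + s • 1) : k ≤ m := by
  obtain ⟨N, hN⟩ := h
  rw [← map_pow, ← Algebra.smul_def] at hN
  refine hmax k ⟨N.trace, ?_⟩ ⟨s, -N.det, ?_⟩
  · simpa [htr, CharTwo.two_eq_zero] using congrArg trace hN
  · have := congrArg det hN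
    rw [det_add_smul_one_of_trace_eq_of_det_eq htr hdet, det_smul, Fintype.card_fin] at this
    linear_combination -this

theorem not_scalar_mod_of_not_pow_succ_dvd [IsDomain R] {π a b r : R} (hπ : Prime π) {m i : ℕ}
    {A N : Matrix (Fin 2) (Fin 2) R} (htr : A.trace = a) (hdet : A.det = -b)
    (hmax : ∀ m' : ℕ, π ^ m' ∣ a → (∃ r' : R, π ^ (2 * m') ∣ (b - r' * (r' + a))) → m' ≤ m)
    (hr : π ^ (2 * m) ∣ (b - r * (r + a))) (hN : A + r • 1 = π ^ i • N)
    (hi : ¬ algebraMap R (Matrix (Fin 2) (Fin 2) R) π ^ (i + 1) ∣ A + r • 1) :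
    ¬ (π ∣ N 0 1 ∧ π ∣ N 1 0 ∧ π ∣ N 0 0 - N 1 1) := by
  rintro ⟨h01, h10, hd⟩
  set P := algebraMap R (Matrix (Fin 2) (Fin 2) R)
  have hshift : P π ∣ N - N 0 0 • 1 := by
    rw [algebraMap_dvd_iff]
    simp [Fin.forall_fin_two, h01, h10, dvd_sub_comm.mp hd]
  have him : i + 1 ≤ m := by
    refine le_of_algebraMap_pow_dvd_add_smul_one htr hdet hmax (s := r - π ^ i * N 0 0) ?_
    have : A + (r - π ^ i * N 0 0) • 1 = P π ^ i * (N - N 0 0 • 1) := by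
      rw [← map_pow, ← Algebra.smul_def, smul_sub, ← hN, smul_smul, sub_smul]
      abel
    rw [this, pow_succ]
    exact mul_dvd_mul_left _ hshift
  have hdetN : π ∣ N.det := by
    have h : π ^ (2 * i) * π ∣ π ^ (2 * i) * -N.det := by
      have := det_add_smul_one_of_trace_eq_of_det_eq htr hdet r
      rw [hN, det_smul, Fintype.card_fin] at this
      rw [← pow_succ, mul_neg, mul_comm 2 i, pow_mul, this, neg_neg]
      exact (pow_dvd_pow π (by omega)).trans hr
    exact dvd_neg.mp ((mul_dvd_mul_iff_left (pow_ne_zero _ hπ.ne_zero)).mp h)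
  refine hi ?_
  rw [hN, pow_succ, Algebra.smul_def, map_pow]
  exact mul_dvd_mul_left _ (algebraMap_dvd_of_dvd_det hπ h01 h10 hd hdetN)

theorem multiplicity_eq_of_conj_eq [IsDomain R] {π a r c : R} (hπ : Irreducible π) {j : ℕ}
    (hja : π ^ j ∣ a) (hjc : π ^ j ∣ c) {A : Matrix (Fin 2) (Fin 2) R}
    (U : (Matrix (Fin 2) (Fin 2) R)ˣ)
    (hU : (U : Matrix (Fin 2) (Fin 2) R) * A * (U⁻¹ : _) = !![-r, π ^ j; c, a + r]) :
    multiplicity (algebraMap R (Matrix (Fin 2) (Fin 2) R) π) (A + r • 1) = j := by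
  have hconj : (U : Matrix (Fin 2) (Fin 2) R) * (A + r • 1) * (U⁻¹ : _) = !![0, π ^ j; c, a] := by
    rw [mul_add, add_mul, hU, mul_smul_comm, mul_one, smul_mul_assoc, Units.mul_inv]
    ext i j
    fin_cases i <;> fin_cases j <;> simp [CharTwo.add_self_eq_zero, add_assoc]
  have hcentral : ∀ k p, Commute (algebraMap R (Matrix (Fin 2) (Fin 2) R) π ^ k) p :=
    fun k p => (Algebra.commute_algebraMap_left π p).pow_left k
  apply multiplicity_eq_of_dvd_of_not_dvd <;>
    rw [← dvd_conj_iff_of_forall_commute (hcentral _) U, hconj, ← map_pow, algebraMap_dvd_iff]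
  · simp [Fin.forall_fin_two, hja, hjc]
  · intro h
    have h01 := h 0 1
    simp only [of_apply, cons_val', cons_val_zero, cons_val_one, empty_val', cons_val_fin_one]
      at h01
    exact absurd ((pow_dvd_pow_iff hπ.ne_zero hπ.not_isUnit).mp h01) (by omega)

end CharTwo

theorem char_two_separable_classification_general
    (R : Type*) [CommRing R] [IsDomain R] [IsDiscreteValuationRing R] [CharP R 2]
    (π : R) (hπ : Irreducible π)
    (a b : R) (f : R[X]) (hf : f = X ^ 2 - C a * X - C b)
    (m : ℕ) (hma : π ^ m ∣ a)
    (r : R) (hr : π ^ (2 * m) ∣ (b - r * (r + a)))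
    (hmax : ∀ m' : ℕ, π ^ m' ∣ a →
      (∃ r' : R, π ^ (2 * m') ∣ (b - r' * (r' + a))) → m' ≤ m) :
    ∀ A : Matrix (Fin 2) (Fin 2) R, A.charpoly = f →
      ∃! i : ℕ, i ≤ m ∧ ∃ c : R, b - r * (r + a) = π ^ i * c ∧
        ∃ U : (Matrix (Fin 2) (Fin 2) R)ˣ,
          (U : Matrix (Fin 2) (Fin 2) R) * A * (U⁻¹ : _) = !![-r, π ^ i; c, a + r] := by
  intro A hA
  obtain ⟨htr, hdet⟩ := trace_eq_and_det_eq_of_charpoly_eq (hA.trans hf)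
  set P := algebraMap R (Matrix (Fin 2) (Fin 2) R)
  have hbound {s : R} {k : ℕ} : P π ^ k ∣ A + s • 1 → k ≤ m :=
    le_of_algebraMap_pow_dvd_add_smul_one htr hdet hmax
  have hfin : FiniteMultiplicity (P π) (A + r • 1) := ⟨m, fun h => by have := hbound h; omega⟩
  set i := multiplicity (P π) (A + r • 1)
  refine ⟨i, ⟨hbound (pow_multiplicity_dvd _ _), ?_⟩, ?_⟩
  · obtain ⟨N, hN⟩ := pow_multiplicity_dvd (P π) (A + r • 1)
    rw [← map_pow, ← Algebra.smul_def] at hN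
    have hns := not_scalar_mod_of_not_pow_succ_dvd hπ.prime htr hdet hmax hr hN
      (hfin.not_pow_dvd_of_multiplicity_lt (Nat.lt_succ_self i))
    obtain ⟨U, hU⟩ := exists_conj_eq_of_add_smul_one_eq_smul hN
      (by simpa only [hπ.maximalIdeal_eq, Ideal.mem_span_singleton] using hns)
    refine ⟨_, ?_, U, htr ▸ hU⟩
    have hdetN := det_add_smul_one_of_trace_eq_of_det_eq htr hdet r
    rw [hN, det_smul, Fintype.card_fin] at hdetN
    linear_combination hdetN
  · rintro j ⟨hjm, c, hc, U, hU⟩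
    have hjc : π ^ j ∣ c := by
      refine (mul_dvd_mul_iff_left (pow_ne_zero j hπ.ne_zero)).mp ?_
      rw [← pow_add, ← hc, ← two_mul]
      exact (pow_dvd_pow π (by omega)).trans hr
    exact (multiplicity_eq_of_conj_eq hπ ((pow_dvd_pow π hjm).trans hma) hjc U hU).symm

/-- Let `R` be a DVR of characteristic `2` with uniformizer `π` and
valuation `v`, and `f(x) = x² − ax − b ∈ R[x]` monic irreducible over the fraction
field `K` and separable. Let `m` be the maximal integer in `{0, …, v(a)}` such that
`v(b − r(r + a)) ≥ 2m` for some `r ∈ R`, and fix such an `r`. Then every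
`A ∈ Mat_2(R)` with characteristic polynomial `f` is similar over `R` to exactly one
of the matrices `[[−r, πⁱ],[(b − r(r + a))/πⁱ, a + r]]` with `0 ≤ i ≤ m`. -/
theorem char_two_separable_classification
    (R : Type*) [CommRing R] [IsDomain R] [IsDiscreteValuationRing R] [CharP R 2]
    (K : Type*) [Field K] [Algebra R K] [IsFractionRing R K]
    (π : R) (hπ : Irreducible π)
    (a b : R) (f : R[X]) (hf : f = X ^ 2 - C a * X - C b)
    (hirr : Irreducible (f.map (algebraMap R K)))
    (hsep : (f.map (algebraMap R K)).Separable)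
    (m : ℕ) (hma : π ^ m ∣ a)
    (r : R) (hr : π ^ (2 * m) ∣ (b - r * (r + a)))
    (hmax : ∀ m' : ℕ, π ^ m' ∣ a →
      (∃ r' : R, π ^ (2 * m') ∣ (b - r' * (r' + a))) → m' ≤ m) :
    ∀ A : Matrix (Fin 2) (Fin 2) R, A.charpoly = f →
      ∃! i : ℕ, i ≤ m ∧ ∃ c : R, b - r * (r + a) = π ^ i * c ∧
        ∃ U : (Matrix (Fin 2) (Fin 2) R)ˣ,
          (U : Matrix (Fin 2) (Fin 2) R) * A * (U⁻¹ : _) = !![-r, π ^ i; c, a + r] :=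
  char_two_separable_classification_general R π hπ a b f hf m hma r hr hmax
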